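/- (Corollary, Section 5) In the Section-5 setup below, the m×m matrix φ := Φ_{-1,-1} over A solves d̄ d φ + (d̄φ)(d̄φ) = 0, i.e., the equation obtained from d d̄ φ + (dφ)(dφ) = 0 by exchanging d and d̄. -/
import Mathlib


/-- A bidifferential calculus: a unital graded associative algebra
`Ω = ⊕_{r≥0} Ω^r` over a field `𝕂`, together with two `𝕂`-linear graded
derivations `d`, `dbar` of degree one satisfying `d² = d̄² = d d̄ + d̄ d = 0`. -/
structure BidiffCalculus (𝕂 : Type) [Field 𝕂] (Ω : Type) [Ring Ω] [Algebra 𝕂 Ω] where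
  grade : ℕ → Submodule 𝕂 Ω
  internal : DirectSum.IsInternal grade
  one_mem : (1 : Ω) ∈ grade 0
  mul_mem : ∀ (r s : ℕ), ∀ a ∈ grade r, ∀ b ∈ grade s, a * b ∈ grade (r + s)
  d : Ω →ₗ[𝕂] Ω
  dbar : Ω →ₗ[𝕂] Ω
  d_grade : ∀ (r : ℕ), ∀ a ∈ grade r, d a ∈ grade (r + 1)
  dbar_grade : ∀ (r : ℕ), ∀ a ∈ grade r, dbar a ∈ grade (r + 1)
  d_leibniz : ∀ (r : ℕ), ∀ a ∈ grade r, ∀ b : Ω,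
      d (a * b) = d a * b + ((-1 : ℤ) ^ r) • (a * d b)
  dbar_leibniz : ∀ (r : ℕ), ∀ a ∈ grade r, ∀ b : Ω,
      dbar (a * b) = dbar a * b + ((-1 : ℤ) ^ r) • (a * dbar b)
  d_d : ∀ a : Ω, d (d a) = 0
  dbar_dbar : ∀ a : Ω, dbar (dbar a) = 0
  d_dbar_anticomm : ∀ a : Ω, d (dbar a) + dbar (d a) = 0

namespace BidiffCalculus

variable {𝕂 : Type} [Field 𝕂] {Ω : Type} [Ring Ω] [Algebra 𝕂 Ω]

/-- Entrywise action of `d` on matrices over `Ω`. -/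
def matD (S : BidiffCalculus 𝕂 Ω) {m n : ℕ} (M : Matrix (Fin m) (Fin n) Ω) :
    Matrix (Fin m) (Fin n) Ω := M.map S.d

/-- Entrywise action of `dbar` on matrices over `Ω`. -/
def matDbar (S : BidiffCalculus 𝕂 Ω) {m n : ℕ} (M : Matrix (Fin m) (Fin n) Ω) :
    Matrix (Fin m) (Fin n) Ω := M.map S.dbar

/-- A matrix has all entries of degree `r`. -/
def MatIn (S : BidiffCalculus 𝕂 Ω) (r : ℕ) {m n : ℕ} (M : Matrix (Fin m) (Fin n) Ω) : Prop :=
  ∀ i j, M i j ∈ S.grade r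

variable (S : BidiffCalculus 𝕂 Ω)

lemma d_one : S.d 1 = 0 := by
  have h := S.d_leibniz 0 1 S.one_mem 1
  simp only [mul_one, one_mul, pow_zero, one_smul] at h
  exact (left_eq_add.mp h)

lemma dbar_one : S.dbar 1 = 0 := by
  have h := S.dbar_leibniz 0 1 S.one_mem 1
  simp only [mul_one, one_mul, pow_zero, one_smul] at h
  exact (left_eq_add.mp h)

lemma matD_mul0 {p q r : ℕ} {A : Matrix (Fin p) (Fin q) Ω} (hA : S.MatIn 0 A)
    (B : Matrix (Fin q) (Fin r) Ω) :
    S.matD (A * B) = S.matD A * B + A * S.matD B := by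
  ext i j
  simp only [matD, Matrix.map_apply, Matrix.add_apply, Matrix.mul_apply, map_sum]
  rw [← Finset.sum_add_distrib]
  refine Finset.sum_congr rfl fun k _ => ?_
  rw [S.d_leibniz 0 _ (hA i k)]
  simp

lemma matDbar_mul0 {p q r : ℕ} {A : Matrix (Fin p) (Fin q) Ω} (hA : S.MatIn 0 A)
    (B : Matrix (Fin q) (Fin r) Ω) :
    S.matDbar (A * B) = S.matDbar A * B + A * S.matDbar B := by
  ext i j
  simp only [matDbar, Matrix.map_apply, Matrix.add_apply, Matrix.mul_apply, map_sum]
  rw [← Finset.sum_add_distrib]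
  refine Finset.sum_congr rfl fun k _ => ?_
  rw [S.dbar_leibniz 0 _ (hA i k)]
  simp

lemma matD_mul1 {p q r : ℕ} {A : Matrix (Fin p) (Fin q) Ω} (hA : S.MatIn 1 A)
    (B : Matrix (Fin q) (Fin r) Ω) :
    S.matD (A * B) = S.matD A * B - A * S.matD B := by
  ext i j
  simp only [matD, Matrix.map_apply, Matrix.sub_apply, Matrix.mul_apply, map_sum]
  rw [← Finset.sum_sub_distrib]
  refine Finset.sum_congr rfl fun k _ => ?_
  rw [S.d_leibniz 1 _ (hA i k)]
  simp [sub_eq_add_neg]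

lemma matD_matD {p q : ℕ} (M : Matrix (Fin p) (Fin q) Ω) : S.matD (S.matD M) = 0 := by
  ext i j; exact S.d_d _

lemma matDbar_matD {p q : ℕ} (M : Matrix (Fin p) (Fin q) Ω) :
    S.matDbar (S.matD M) = - S.matD (S.matDbar M) := by
  ext i j
  exact eq_neg_of_add_eq_zero_left ((add_comm _ _).trans (S.d_dbar_anticomm (M i j)))

lemma matD_one {p : ℕ} : S.matD (1 : Matrix (Fin p) (Fin p) Ω) = 0 := by
  ext i j
  simp only [matD, Matrix.map_apply, Matrix.one_apply, Matrix.zero_apply]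
  split
  · exact S.d_one
  · exact map_zero _

lemma matDbar_one {p : ℕ} : S.matDbar (1 : Matrix (Fin p) (Fin p) Ω) = 0 := by
  ext i j
  simp only [matDbar, Matrix.map_apply, Matrix.one_apply, Matrix.zero_apply]
  split
  · exact S.dbar_one
  · exact map_zero _

lemma matD_sub {p q : ℕ} (M N : Matrix (Fin p) (Fin q) Ω) :
    S.matD (M - N) = S.matD M - S.matD N := by
  ext i j; simp [matD, Matrix.map_apply]

lemma matD_add {p q : ℕ} (M N : Matrix (Fin p) (Fin q) Ω) :
    S.matD (M + N) = S.matD M + S.matD N := by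
  ext i j; simp [matD, Matrix.map_apply]

lemma matIn_mul0 {p q r : ℕ} {A : Matrix (Fin p) (Fin q) Ω} {B : Matrix (Fin q) (Fin r) Ω}
    (hA : S.MatIn 0 A) (hB : S.MatIn 0 B) : S.MatIn 0 (A * B) := by
  intro i j
  rw [Matrix.mul_apply]
  exact Submodule.sum_mem _ fun k _ => by simpa using S.mul_mem 0 0 _ (hA i k) _ (hB k j)

lemma matIn_one {p : ℕ} : S.MatIn 0 (1 : Matrix (Fin p) (Fin p) Ω) := by
  intro i j
  rw [Matrix.one_apply]
  split
  · exact S.one_mem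
  · exact Submodule.zero_mem _

lemma matIn_sub {r : ℕ} {p q : ℕ} {A B : Matrix (Fin p) (Fin q) Ω}
    (hA : S.MatIn r A) (hB : S.MatIn r B) : S.MatIn r (A - B) := fun i j =>
  Submodule.sub_mem _ (hA i j) (hB i j)

lemma matIn_matD {p q : ℕ} {A : Matrix (Fin p) (Fin q) Ω}
    (hA : S.MatIn 0 A) : S.MatIn 1 (S.matD A) := fun i j => S.d_grade 0 _ (hA i j)


lemma matDbar_inv {p : ℕ} (U : (Matrix (Fin p) (Fin p) Ω)ˣ)
    (hUi : S.MatIn 0 (Units.val U⁻¹)) :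
    S.matDbar (Units.val U⁻¹) = -(Units.val U⁻¹ * S.matDbar (Units.val U) * Units.val U⁻¹) := by
  have h0 : S.matDbar (Units.val U⁻¹ * Units.val U) = 0 := by
    rw [U.inv_mul]; exact S.matDbar_one
  rw [S.matDbar_mul0 hUi] at h0
  have h1 : S.matDbar (Units.val U⁻¹) * Units.val U
      = -(Units.val U⁻¹ * S.matDbar (Units.val U)) := eq_neg_of_add_eq_zero_left h0
  calc S.matDbar (Units.val U⁻¹)
      = S.matDbar (Units.val U⁻¹) * (Units.val U * Units.val U⁻¹) := by
        rw [U.mul_inv, Matrix.mul_one]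
    _ = S.matDbar (Units.val U⁻¹) * Units.val U * Units.val U⁻¹ := by rw [Matrix.mul_assoc]
    _ = -(Units.val U⁻¹ * S.matDbar (Units.val U)) * Units.val U⁻¹ := by rw [h1]
    _ = -(Units.val U⁻¹ * S.matDbar (Units.val U) * Units.val U⁻¹) := by rw [Matrix.neg_mul]

lemma matD_inv {p : ℕ} (U : (Matrix (Fin p) (Fin p) Ω)ˣ)
    (hUi : S.MatIn 0 (Units.val U⁻¹)) :
    S.matD (Units.val U⁻¹) = -(Units.val U⁻¹ * S.matD (Units.val U) * Units.val U⁻¹) := by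
  have h0 : S.matD (Units.val U⁻¹ * Units.val U) = 0 := by
    rw [U.inv_mul]; exact S.matD_one
  rw [S.matD_mul0 hUi] at h0
  have h1 : S.matD (Units.val U⁻¹) * Units.val U
      = -(Units.val U⁻¹ * S.matD (Units.val U)) := eq_neg_of_add_eq_zero_left h0
  calc S.matD (Units.val U⁻¹)
      = S.matD (Units.val U⁻¹) * (Units.val U * Units.val U⁻¹) := by
        rw [U.mul_inv, Matrix.mul_one]
    _ = S.matD (Units.val U⁻¹) * Units.val U * Units.val U⁻¹ := by rw [Matrix.mul_assoc]
    _ = -(Units.val U⁻¹ * S.matD (Units.val U)) * Units.val U⁻¹ := by rw [h1]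
    _ = -(Units.val U⁻¹ * S.matD (Units.val U) * Units.val U⁻¹) := by rw [Matrix.neg_mul]


end BidiffCalculus


section UCancel
variable {Ω : Type} [Ring Ω] {n p : ℕ}

lemma ucancel1 (U : (Matrix (Fin n) (Fin n) Ω)ˣ) (x : Matrix (Fin n) (Fin p) Ω) :
    Units.val U * (Units.val U⁻¹ * x) = x := by
  rw [← Matrix.mul_assoc, U.mul_inv, Matrix.one_mul]

lemma ucancel2 (U : (Matrix (Fin n) (Fin n) Ω)ˣ) (x : Matrix (Fin n) (Fin p) Ω) :
    Units.val U⁻¹ * (Units.val U * x) = x := by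
  rw [← Matrix.mul_assoc, U.inv_mul, Matrix.one_mul]

end UCancel

/-- `Φ_{i,j} = θ Δ^i Ω̂^{-1} Γ^j η`, with negative powers given by powers of inverses. -/
def Phi {R : Type} [Ring R] {m n : ℕ} (θ : Matrix (Fin m) (Fin n) R)
    (η : Matrix (Fin n) (Fin m) R) (Δ Γ W : (Matrix (Fin n) (Fin n) R)ˣ) (i j : ℤ) :
    Matrix (Fin m) (Fin m) R :=
  θ * Units.val (Δ ^ i) * Units.val W⁻¹ * Units.val (Γ ^ j) * η

set_option maxHeartbeats 2000000 in
/-- Corollary, Section 5: `φ := Φ_{-1,-1}` solves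
`d̄ d φ + (d̄φ)(d̄φ) = 0`. -/
theorem Phi_corollary
    {𝕂 : Type} [Field 𝕂] [CharZero 𝕂] {Ω : Type} [Ring Ω] [Algebra 𝕂 Ω]
    (S : BidiffCalculus 𝕂 Ω) {m n : ℕ}
    (Δ Γ W : (Matrix (Fin n) (Fin n) Ω)ˣ)
    (lam kap : Matrix (Fin n) (Fin n) Ω)
    (θ : Matrix (Fin m) (Fin n) Ω) (η : Matrix (Fin n) (Fin m) Ω)
    (hΔ : S.MatIn 0 (Units.val Δ)) (hΔinv : S.MatIn 0 (Units.val Δ⁻¹))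
    (hΓ : S.MatIn 0 (Units.val Γ)) (hΓinv : S.MatIn 0 (Units.val Γ⁻¹))
    (hW : S.MatIn 0 (Units.val W)) (hWinv : S.MatIn 0 (Units.val W⁻¹))
    (hlam : S.MatIn 1 lam) (hkap : S.MatIn 1 kap)
    (hθ : S.MatIn 0 θ) (hη : S.MatIn 0 η)
    (heqΔ : S.matDbar (Units.val Δ) + (lam * Units.val Δ - Units.val Δ * lam)
        = S.matD (Units.val Δ) * Units.val Δ)
    (heqlam : S.matDbar lam + lam * lam = S.matD lam * Units.val Δ)
    (heqΓ : S.matDbar (Units.val Γ) - (kap * Units.val Γ - Units.val Γ * kap)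
        = Units.val Γ * S.matD (Units.val Γ))
    (heqkap : S.matDbar kap - kap * kap = Units.val Γ * S.matD kap)
    (heqθ : S.matDbar θ = S.matD θ * Units.val Δ + θ * lam)
    (heqη : S.matDbar η = Units.val Γ * S.matD η + kap * η)
    (hSyl : Units.val Γ * Units.val W - Units.val W * Units.val Δ = η * θ)
    (heqW : S.matDbar (Units.val W) = S.matD (Units.val W) * Units.val Δ
        - S.matD (Units.val Γ) * Units.val W + kap * Units.val W + Units.val W * lam
        + S.matD η * θ) :
    S.matDbar (S.matD (Phi θ η Δ Γ W (-1) (-1)))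
      + S.matDbar (Phi θ η Δ Γ W (-1) (-1)) * S.matDbar (Phi θ η Δ Γ W (-1) (-1))
      = 0 := by
  have hφeq : Phi θ η Δ Γ W (-1) (-1) = θ * (Units.val Δ⁻¹) * (Units.val W⁻¹) * (Units.val Γ⁻¹) * η := by
    unfold Phi
    rw [zpow_neg_one, zpow_neg_one]
  -- memberships
  have h1 : S.MatIn 0 (θ * (Units.val Δ⁻¹)) := S.matIn_mul0 hθ hΔinv
  have h2 : S.MatIn 0 (θ * (Units.val Δ⁻¹) * (Units.val W⁻¹)) := S.matIn_mul0 h1 hWinv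
  have h3 : S.MatIn 0 (θ * (Units.val Δ⁻¹) * (Units.val W⁻¹) * (Units.val Γ⁻¹)) := S.matIn_mul0 h2 hΓinv
  have hψ0 : S.MatIn 0 (θ * (Units.val Δ⁻¹) * (Units.val W⁻¹) * η) := S.matIn_mul0 h2 hη
  have hχ0 : S.MatIn 0 (θ * (Units.val W⁻¹) * (Units.val Γ⁻¹) * η) :=
    S.matIn_mul0 (S.matIn_mul0 (S.matIn_mul0 hθ hWinv) hΓinv) hη
  -- Sylvester, in a convenient form
  have H0 : ∀ x : Matrix (Fin n) (Fin m) Ω,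
      η * (θ * x) = (Units.val Γ) * ((Units.val W) * x) - (Units.val W) * ((Units.val Δ) * x) := by
    intro x
    conv_lhs => rw [← Matrix.mul_assoc, ← hSyl]
    simp only [Matrix.sub_mul, Matrix.mul_assoc]
  -- dbar formulas for inverses
  have hdbarAiE : S.matDbar (Units.val Δ⁻¹)
      = -((Units.val Δ⁻¹) * (S.matD (Units.val Δ) * (Units.val Δ) - (lam * (Units.val Δ) - (Units.val Δ) * lam)) * (Units.val Δ⁻¹)) := by
    rw [S.matDbar_inv Δ hΔinv, eq_sub_of_add_eq heqΔ]
  have hdbarGiE : S.matDbar (Units.val Γ⁻¹)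
      = -((Units.val Γ⁻¹) * ((Units.val Γ) * S.matD (Units.val Γ) + (kap * (Units.val Γ) - (Units.val Γ) * kap)) * (Units.val Γ⁻¹)) := by
    rw [S.matDbar_inv Γ hΓinv, eq_add_of_sub_eq heqΓ]
  have hdbarViE : S.matDbar (Units.val W⁻¹)
      = -((Units.val W⁻¹) * (S.matD (Units.val W) * (Units.val Δ) - S.matD (Units.val Γ) * (Units.val W) + kap * (Units.val W) + (Units.val W) * lam + S.matD η * θ) * (Units.val W⁻¹)) := by
    rw [S.matDbar_inv W hWinv, heqW]
  have hdAiE : S.matD (Units.val Δ⁻¹) = -((Units.val Δ⁻¹) * S.matD (Units.val Δ) * (Units.val Δ⁻¹)) := S.matD_inv Δ hΔinv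
  have hdViE : S.matD (Units.val W⁻¹) = -((Units.val W⁻¹) * S.matD (Units.val W) * (Units.val W⁻¹)) := S.matD_inv W hWinv
  -- the key formula: d̄φ = (dψ)(1 - χ)
  have L1 : S.matDbar (θ * (Units.val Δ⁻¹) * (Units.val W⁻¹) * (Units.val Γ⁻¹) * η)
      = S.matD (θ * (Units.val Δ⁻¹) * (Units.val W⁻¹) * η) * (1 - θ * (Units.val W⁻¹) * (Units.val Γ⁻¹) * η) := by
    rw [S.matDbar_mul0 h3 η, S.matDbar_mul0 h2 (Units.val Γ⁻¹), S.matDbar_mul0 h1 (Units.val W⁻¹),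
      S.matDbar_mul0 hθ (Units.val Δ⁻¹), S.matD_mul0 h2 η, S.matD_mul0 h1 (Units.val W⁻¹), S.matD_mul0 hθ (Units.val Δ⁻¹),
      hdbarAiE, hdbarViE, hdbarGiE, heqθ, heqη, hdAiE, hdViE]
    simp only [Matrix.mul_add, Matrix.add_mul, Matrix.mul_sub, Matrix.sub_mul,
      Matrix.neg_mul, Matrix.mul_neg, Matrix.mul_one, Matrix.one_mul, Matrix.mul_assoc,
      H0, ucancel1, ucancel2, neg_neg, neg_sub]
    abel
  -- χψ = ψ - χ and ψχ = ψ - χ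
  have hχψ : (θ * (Units.val W⁻¹) * (Units.val Γ⁻¹) * η) * (θ * (Units.val Δ⁻¹) * (Units.val W⁻¹) * η)
      = θ * (Units.val Δ⁻¹) * (Units.val W⁻¹) * η - θ * (Units.val W⁻¹) * (Units.val Γ⁻¹) * η := by
    have e : (θ * (Units.val W⁻¹) * (Units.val Γ⁻¹) * η) * (θ * (Units.val Δ⁻¹) * (Units.val W⁻¹) * η)
        = θ * ((Units.val W⁻¹) * ((Units.val Γ⁻¹) * (η * (θ * ((Units.val Δ⁻¹) * ((Units.val W⁻¹) * η)))))) := by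
      simp only [Matrix.mul_assoc]
    rw [e, H0]
    simp only [Matrix.mul_sub, Matrix.mul_assoc, ucancel1, ucancel2]
  have hψχ : (θ * (Units.val Δ⁻¹) * (Units.val W⁻¹) * η) * (θ * (Units.val W⁻¹) * (Units.val Γ⁻¹) * η)
      = θ * (Units.val Δ⁻¹) * (Units.val W⁻¹) * η - θ * (Units.val W⁻¹) * (Units.val Γ⁻¹) * η := by
    have e : (θ * (Units.val Δ⁻¹) * (Units.val W⁻¹) * η) * (θ * (Units.val W⁻¹) * (Units.val Γ⁻¹) * η)
        = θ * ((Units.val Δ⁻¹) * ((Units.val W⁻¹) * (η * (θ * ((Units.val W⁻¹) * ((Units.val Γ⁻¹) * η)))))) := by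
      simp only [Matrix.mul_assoc]
    rw [e, H0]
    simp only [Matrix.mul_sub, Matrix.mul_assoc, ucancel1, ucancel2]
  -- (1-χ)(1+ψ) = 1 = (1+ψ)(1-χ)
  have hL2a : (1 - θ * (Units.val W⁻¹) * (Units.val Γ⁻¹) * η) * (1 + θ * (Units.val Δ⁻¹) * (Units.val W⁻¹) * η) = 1 := by
    have e : (1 - θ * (Units.val W⁻¹) * (Units.val Γ⁻¹) * η) * (1 + θ * (Units.val Δ⁻¹) * (Units.val W⁻¹) * η)
        = 1 + θ * (Units.val Δ⁻¹) * (Units.val W⁻¹) * η - θ * (Units.val W⁻¹) * (Units.val Γ⁻¹) * η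
          - (θ * (Units.val W⁻¹) * (Units.val Γ⁻¹) * η) * (θ * (Units.val Δ⁻¹) * (Units.val W⁻¹) * η) := by noncomm_ring
    rw [e, hχψ]; abel
  have hL2b : (1 + θ * (Units.val Δ⁻¹) * (Units.val W⁻¹) * η) * (1 - θ * (Units.val W⁻¹) * (Units.val Γ⁻¹) * η) = 1 := by
    have e : (1 + θ * (Units.val Δ⁻¹) * (Units.val W⁻¹) * η) * (1 - θ * (Units.val W⁻¹) * (Units.val Γ⁻¹) * η)
        = 1 + θ * (Units.val Δ⁻¹) * (Units.val W⁻¹) * η - θ * (Units.val W⁻¹) * (Units.val Γ⁻¹) * η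
          - (θ * (Units.val Δ⁻¹) * (Units.val W⁻¹) * η) * (θ * (Units.val W⁻¹) * (Units.val Γ⁻¹) * η) := by noncomm_ring
    rw [e, hψχ]; abel
  -- dχ = (1-χ) dψ (1-χ)
  have h1χ : S.MatIn 0 (1 - θ * (Units.val W⁻¹) * (Units.val Γ⁻¹) * η) := S.matIn_sub S.matIn_one hχ0
  have key : S.matD (θ * (Units.val W⁻¹) * (Units.val Γ⁻¹) * η) * (1 + θ * (Units.val Δ⁻¹) * (Units.val W⁻¹) * η)
      = (1 - θ * (Units.val W⁻¹) * (Units.val Γ⁻¹) * η) * S.matD (θ * (Units.val Δ⁻¹) * (Units.val W⁻¹) * η) := by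
    have h := congrArg S.matD hL2a
    rw [S.matD_mul0 h1χ, S.matD_sub, S.matD_add, S.matD_one] at h
    rw [zero_sub, zero_add, Matrix.neg_mul, neg_add_eq_zero] at h
    exact h
  have hdchi : S.matD (θ * (Units.val W⁻¹) * (Units.val Γ⁻¹) * η)
      = (1 - θ * (Units.val W⁻¹) * (Units.val Γ⁻¹) * η) * S.matD (θ * (Units.val Δ⁻¹) * (Units.val W⁻¹) * η) * (1 - θ * (Units.val W⁻¹) * (Units.val Γ⁻¹) * η) := by
    calc S.matD (θ * (Units.val W⁻¹) * (Units.val Γ⁻¹) * η)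
        = S.matD (θ * (Units.val W⁻¹) * (Units.val Γ⁻¹) * η)
            * ((1 + θ * (Units.val Δ⁻¹) * (Units.val W⁻¹) * η) * (1 - θ * (Units.val W⁻¹) * (Units.val Γ⁻¹) * η)) := by
          rw [hL2b, Matrix.mul_one]
      _ = S.matD (θ * (Units.val W⁻¹) * (Units.val Γ⁻¹) * η) * (1 + θ * (Units.val Δ⁻¹) * (Units.val W⁻¹) * η)
            * (1 - θ * (Units.val W⁻¹) * (Units.val Γ⁻¹) * η) := by rw [← Matrix.mul_assoc]
      _ = (1 - θ * (Units.val W⁻¹) * (Units.val Γ⁻¹) * η) * S.matD (θ * (Units.val Δ⁻¹) * (Units.val W⁻¹) * η)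
            * (1 - θ * (Units.val W⁻¹) * (Units.val Γ⁻¹) * η) := by rw [key]
  -- finish
  rw [hφeq, S.matDbar_matD, L1]
  have hx : S.matD (S.matD (θ * (Units.val Δ⁻¹) * (Units.val W⁻¹) * η) * (1 - θ * (Units.val W⁻¹) * (Units.val Γ⁻¹) * η))
      = S.matD (θ * (Units.val Δ⁻¹) * (Units.val W⁻¹) * η)
        * ((1 - θ * (Units.val W⁻¹) * (Units.val Γ⁻¹) * η) * S.matD (θ * (Units.val Δ⁻¹) * (Units.val W⁻¹) * η)
            * (1 - θ * (Units.val W⁻¹) * (Units.val Γ⁻¹) * η)) := by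
    rw [S.matD_mul1 (S.matIn_matD hψ0), S.matD_matD, S.matD_sub, S.matD_one, ← hdchi]
    simp [Matrix.zero_mul, zero_sub, Matrix.mul_neg, neg_neg]
  rw [hx]
  simp only [Matrix.mul_assoc]
  abel
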